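/- Let p ≥ 2 and q ≥ 1 be integers and α < 0 a real number. Then the integral ∫₁^∞ (sinh s)^{p−1}·(cosh s)^{q}·(∫₀^{exp(αs)} (sinh r)^{q−1} dr) ds is finite if and only if α < (1−p−q)/q. -/

import Mathlib

/-!
For large `s`, both `sinh s` and `cosh s` are comparable to `exp s`. For `ε > 0` the inner
integral is squeezed between `ε ^ q / q` (from `r ≤ sinh r`) and `sinh ε ^ q / q`
(from `1 ≤ cosh r`, the latter being the exact integral of `sinh r ^ (q - 1) * cosh r`), and
`sinh ε ~ ε` as `ε → 0`; since `exp (α * s) → 0`, the inner integral is comparable to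
`exp (q * α * s)`. Hence the integrand is `Θ(exp (β * s))` with `β = p - 1 + q + q * α`, which
is integrable at infinity exactly when `β < 0`.
-/
open MeasureTheory Real Set Filter Asymptotics Topology
open scoped ENNReal

theorem Asymptotics.IsTheta.integrableAtFilter_iff {α E F : Type*} [MeasurableSpace α]
    [NormedAddCommGroup E] [NormedAddCommGroup F] {f : α → E} {g : α → F} {l : Filter α}
    [l.IsMeasurablyGenerated] {μ : Measure α} (h : f =Θ[l] g)
    (hf : StronglyMeasurableAtFilter f l μ) (hg : StronglyMeasurableAtFilter g l μ) :
    IntegrableAtFilter f l μ ↔ IntegrableAtFilter g l μ :=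
  ⟨h.symm.isBigO.integrableAtFilter hg, h.isBigO.integrableAtFilter hf⟩

theorem Asymptotics.IsTheta.comp_tendsto {α β E F : Type*} [Norm E] [Norm F] {f : β → E}
    {g : β → F} {l : Filter β} (h : f =Θ[l] g) {k : α → β} {l' : Filter α}
    (hk : Tendsto k l' l) : (f ∘ k) =Θ[l'] (g ∘ k) :=
  ⟨h.isBigO.comp_tendsto hk, h.symm.isBigO.comp_tendsto hk⟩

theorem integrableAtFilter_exp_mul_atTop_iff {β : ℝ} :
    IntegrableAtFilter (fun x => exp (β * x)) atTop ↔ β < 0 := by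
  refine ⟨fun h => ?_, fun hβ => ⟨Ioi 0, Ioi_mem_atTop 0, integrableOn_exp_mul_Ioi hβ 0⟩⟩
  by_contra! hβ
  have hone : (fun _ : ℝ => (1 : ℝ)) =O[atTop] fun x => exp (β * x) := by
    refine IsBigO.of_bound 1 ?_
    filter_upwards [eventually_ge_atTop 0] with x hx
    simpa [abs_of_pos (exp_pos _)] using one_le_exp (mul_nonneg hβ hx)
  have hvol : ∀ s ∈ (atTop : Filter ℝ), volume s = ∞ := fun s hs => by
    obtain ⟨b, hb⟩ := mem_atTop_sets.1 hs
    rw [← top_le_iff, ← volume_Ici (a := b)]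
    exact measure_mono hb
  exact one_ne_zero ((hone.integrableAtFilter
    (continuous_const.stronglyMeasurableAtFilter _ _) h).eq_zero_of_tendsto hvol
    tendsto_const_nhds)

theorem Real.isTheta_mul_exp_neg_add_mul_exp (a : ℝ) {b : ℝ} (hb : b ≠ 0) :
    (fun x => a * exp (-x) + b * exp x) =Θ[atTop] exp := by
  have hdecay : (fun x => exp (-x)) =o[atTop] exp := isLittleO_exp_comp_exp_comp.2 <| by
    simpa [← two_mul] using tendsto_id.const_mul_atTop two_pos
  exact (hdecay.const_mul_left a).add_isTheta ((isTheta_const_mul_left hb).2 (isTheta_refl _ _))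

theorem Real.isTheta_sinh_exp_atTop : sinh =Θ[atTop] exp := by
  convert isTheta_mul_exp_neg_add_mul_exp (-2⁻¹) (b := 2⁻¹) (by norm_num) using 1
  ext x
  rw [sinh_eq]
  ring

theorem Real.isTheta_cosh_exp_atTop : cosh =Θ[atTop] exp := by
  convert isTheta_mul_exp_neg_add_mul_exp 2⁻¹ (b := 2⁻¹) (by norm_num) using 1
  ext x
  rw [cosh_eq]
  ring

theorem integral_sinh_pow_mul_cosh (n : ℕ) (ε : ℝ) :
    ∫ r in (0:ℝ)..ε, sinh r ^ n * cosh r = sinh ε ^ (n + 1) / (n + 1) := by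
  have := intervalIntegral.integral_comp_mul_deriv (a := 0) (b := ε) (g := fun u => u ^ n)
    (fun x _ => hasDerivAt_sinh x) continuous_cosh.continuousOn (continuous_pow n)
  simpa [integral_pow] using this

theorem div_le_integral_sinh_pow (n : ℕ) {ε : ℝ} (hε : 0 ≤ ε) :
    ε ^ (n + 1) / (n + 1) ≤ ∫ r in (0:ℝ)..ε, sinh r ^ n := by
  calc ε ^ (n + 1) / (n + 1) = ∫ r in (0:ℝ)..ε, r ^ n := by simp [integral_pow]
    _ ≤ _ := intervalIntegral.integral_mono_on hε ((continuous_pow n).intervalIntegrable _ _)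
      ((continuous_sinh.pow n).intervalIntegrable _ _) fun r hr =>
        pow_le_pow_left₀ hr.1 (self_le_sinh_iff.2 hr.1) n

theorem integral_sinh_pow_le (n : ℕ) {ε : ℝ} (hε : 0 ≤ ε) :
    ∫ r in (0:ℝ)..ε, sinh r ^ n ≤ sinh ε ^ (n + 1) / (n + 1) := by
  rw [← integral_sinh_pow_mul_cosh]
  refine intervalIntegral.integral_mono_on hε ((continuous_sinh.pow n).intervalIntegrable _ _)
    (((continuous_sinh.pow n).mul continuous_cosh).intervalIntegrable _ _) fun r hr => ?_
  exact le_mul_of_one_le_right (pow_nonneg (sinh_nonneg_iff.2 hr.1) n) (one_le_cosh r)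

theorem isTheta_integral_sinh_pow (n : ℕ) :
    (fun ε => ∫ r in (0:ℝ)..ε, sinh r ^ n) =Θ[𝓝[>] 0] fun ε => ε ^ (n + 1) := by
  have hsinh : (fun ε => sinh ε ^ (n + 1)) =O[𝓝[>] 0] fun ε => ε ^ (n + 1) :=
    ((isEquivalent_sinh.isTheta.pow (n + 1)).isBigO).mono nhdsWithin_le_nhds
  have hpos : ∀ᶠ ε in 𝓝[>] (0:ℝ), 0 < ε := self_mem_nhdsWithin
  have hint_nonneg {ε : ℝ} (hε : 0 < ε) : 0 ≤ ∫ r in (0:ℝ)..ε, sinh r ^ n :=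
    (by positivity : (0:ℝ) ≤ ε ^ (n + 1) / (n + 1)).trans (div_le_integral_sinh_pow n hε.le)
  refine ⟨IsBigO.trans (IsBigO.of_bound (n + 1)⁻¹ ?_) hsinh, IsBigO.of_bound (n + 1) ?_⟩
  · filter_upwards [hpos] with ε hε
    rw [norm_of_nonneg (hint_nonneg hε), norm_of_nonneg (by positivity), ← div_eq_inv_mul]
    exact integral_sinh_pow_le n hε.le
  · filter_upwards [hpos] with ε hε
    rw [norm_of_nonneg (hint_nonneg hε), norm_of_nonneg (by positivity),
      ← div_le_iff₀' (by positivity)]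
    exact div_le_integral_sinh_pow n hε.le

theorem isTheta_sinh_pow_mul_cosh_pow_mul_integral_sinh_pow (a b n : ℕ) {α : ℝ}
    (hα : α < 0) :
    (fun s => sinh s ^ a * cosh s ^ b * ∫ r in (0:ℝ)..exp (α * s), sinh r ^ n) =Θ[atTop]
      fun s => exp ((a + b + α * (n + 1)) * s) := by
  have hinner : Tendsto (fun s => exp (α * s)) atTop (𝓝[>] 0) :=
    tendsto_exp_atBot_nhdsGT.comp (tendsto_id.const_mul_atTop_of_neg hα)
  have h := ((isTheta_sinh_exp_atTop.pow a).mul (isTheta_cosh_exp_atTop.pow b)).mul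
    ((isTheta_integral_sinh_pow n).comp_tendsto hinner)
  refine h.trans_eventuallyEq (Eventually.of_forall fun s => ?_)
  simp only [Function.comp, ← exp_nat_mul, ← exp_add]
  push_cast
  ring_nf

/-- The hyperbolic tube domain volume integral is finite iff `α < (1-p-q)/q`. -/
theorem hyperbolic_volume_integral_finite_iff (p q : ℕ) (hp : 2 ≤ p) (hq : 1 ≤ q)
    (α : ℝ) (hα : α < 0) :
    MeasureTheory.IntegrableOn
        (fun s : ℝ => Real.sinh s ^ (p - 1) * Real.cosh s ^ q *
          ∫ r in (0:ℝ)..Real.exp (α * s), Real.sinh r ^ (q - 1)) (Set.Ici 1) ↔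
      α < ((1:ℝ) - p - q) / q := by
  obtain ⟨n, rfl⟩ : ∃ n, q = n + 1 := ⟨q - 1, by omega⟩
  simp only [Nat.add_sub_cancel]
  have hcont : Continuous fun s =>
      sinh s ^ (p - 1) * cosh s ^ (n + 1) * ∫ r in (0:ℝ)..exp (α * s), sinh r ^ n :=
    ((continuous_sinh.pow _).mul (continuous_cosh.pow _)).mul
      ((intervalIntegral.continuous_primitive
        (fun _ _ => (continuous_sinh.pow n).intervalIntegrable _ _) 0).comp (by fun_prop))
  have hΘ := isTheta_sinh_pow_mul_cosh_pow_mul_integral_sinh_pow (p - 1) (n + 1) n hα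
  rw [integrableOn_Ici_iff_integrableAtFilter_atTop,
    and_iff_left (hcont.locallyIntegrable.locallyIntegrableOn _),
    hΘ.integrableAtFilter_iff (hcont.stronglyMeasurableAtFilter _ _)
      ((by fun_prop : Continuous _).stronglyMeasurableAtFilter _ _),
    integrableAtFilter_exp_mul_atTop_iff, lt_div_iff₀ (by positivity),
    Nat.cast_sub (by omega : 1 ≤ p)]
  push_cast
  constructor <;> intro h <;> linarith
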